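/- Let y₁, y₂ ∈ ℝ with y₁ ≥ √3/2 and y₂ ≥ √3/2. Let a = diag(y₁y₂, y₂, 1) be a 3×3 real diagonal matrix and let u be a real 3×3 upper triangular matrix with all diagonal entries equal to 1. Let γ be a 2×2 integer matrix with determinant ±1, and let γ̃ be the 3×3 block-diagonal matrix with blocks γ and 1. Suppose γ̃·u·a = u′·d·k, where u′ is a real upper triangular 3×3 matrix with unit diagonal, d = diag(d₁, d₂, d₃) with d₁, d₂, d₃ > 0, and k is a real orthogonal 3×3 matrix (kᵀk = I). Then max(d₁/d₂, d₂/d₃) ≥ (√3/2)·max(y₁, y₂). -/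

import Mathlib

/-!
Since `k` is orthogonal, `g gᵀ = (u'd)(u'd)ᵀ` for `g = γ̃ u a`, so `d₃²`, `(d₂d₃)²` and
`(d₁d₂d₃)²` are the lower-right `1×1`, `2×2` and `3×3` minors of `g gᵀ`, which can be computed
from `g` directly. The last row of `g` is `(0, 0, 1)`, so `d₃ = 1`; and `d₁d₂ = |det γ| y₁y₂² = y₁y₂²`.
The second row of `g` gives `d₂² = (γ₁₀ y₁y₂)² + ((γ₁₀ u₁₂ + γ₁₁) y₂)²`. If `γ₁₀ = 0` then
`γ₁₁ = ±1`, so `d = a` and the simple roots are unchanged; otherwise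
`d₂ ≥ y₁y₂ ≥ (√3/2) max(y₁, y₂)`.
-/

open Matrix

namespace Matrix

variable {n R : Type*} [Fintype n] [DecidableEq n] [CommRing R]

theorem mul_mul_transpose_of_transpose_mul_self_eq_one (A : Matrix n n R) {k : Matrix n n R}
    (hk : kᵀ * k = 1) : A * k * (A * k)ᵀ = A * Aᵀ := by
  rw [transpose_mul, Matrix.mul_assoc, ← Matrix.mul_assoc k, mul_eq_one_comm.mp hk,
    Matrix.one_mul]

theorem det_mul_sq_of_transpose_mul_self_eq_one (A : Matrix n n R) {k : Matrix n n R}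
    (hk : kᵀ * k = 1) : (A * k).det ^ 2 = A.det ^ 2 := by
  have hk2 : k.det ^ 2 = 1 := by
    simpa [det_mul, det_transpose, sq] using congrArg det hk
  rw [det_mul, mul_pow, hk2, mul_one]

theorem eq_of_diag_eq_one_of_lower_eq_zero_fin_three {u : Matrix (Fin 3) (Fin 3) R}
    (hdiag : ∀ i, u i i = 1) (hlow : ∀ i j : Fin 3, (j : ℕ) < i → u i j = 0) :
    u = !![1, u 0 1, u 0 2; 0, 1, u 1 2; 0, 0, 1] := by
  ext i j
  fin_cases i <;> fin_cases j <;> simp [hdiag, hlow]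

theorem iwasawa_sq_fin_three {x y z d₁ d₂ d₃ : R} {g k : Matrix (Fin 3) (Fin 3) R}
    (hk : kᵀ * k = 1) (hg : g = !![1, x, y; 0, 1, z; 0, 0, 1] * diagonal ![d₁, d₂, d₃] * k) :
    (g * gᵀ) 2 2 = d₃ ^ 2 ∧
      (g * gᵀ) 1 1 * (g * gᵀ) 2 2 - (g * gᵀ) 1 2 ^ 2 = (d₂ * d₃) ^ 2 ∧
      g.det ^ 2 = (d₁ * d₂ * d₃) ^ 2 := by
  have hud : !![1, x, y; 0, 1, z; 0, 0, 1] * diagonal ![d₁, d₂, d₃]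
      = !![d₁, x * d₂, y * d₃; 0, d₂, z * d₃; 0, 0, d₃] := by
    ext i j; fin_cases i <;> fin_cases j <;> simp [mul_diagonal]
  rw [hg, mul_mul_transpose_of_transpose_mul_self_eq_one _ hk,
    det_mul_sq_of_transpose_mul_self_eq_one _ hk, hud]
  refine ⟨?_, ?_, ?_⟩ <;>
    simp only [mul_apply, transpose_apply, Fin.sum_univ_three, det_fin_three, of_apply, cons_val',
      cons_val_zero, cons_val_one, cons_val, cons_val_fin_one] <;> ring

theorem sq_apply_one_one_eq_one_of_isUnit_det {γ : Matrix (Fin 2) (Fin 2) ℤ} (hγ : IsUnit γ.det)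
    (hc : γ 1 0 = 0) : γ 1 1 ^ 2 = 1 := by
  rw [det_fin_two, hc, mul_zero, sub_zero] at hγ
  exact Int.isUnit_sq (IsUnit.mul_iff.mp hγ).2

theorem iwasawa_sq_of_blockGL₂ {a b c d p q r s t x y z d₁ d₂ d₃ : R}
    {k : Matrix (Fin 3) (Fin 3) R} (hk : kᵀ * k = 1)
    (h : !![a, b, 0; c, d, 0; 0, 0, 1] * !![1, p, q; 0, 1, r; 0, 0, 1] * diagonal ![s, t, 1]
      = !![1, x, y; 0, 1, z; 0, 0, 1] * diagonal ![d₁, d₂, d₃] * k) :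
    d₃ ^ 2 = 1 ∧ (d₂ * d₃) ^ 2 = (c * s) ^ 2 + ((c * p + d) * t) ^ 2 ∧
      (d₁ * d₂ * d₃) ^ 2 = ((a * d - b * c) * s * t) ^ 2 := by
  have hg : !![a, b, 0; c, d, 0; 0, 0, 1] * !![1, p, q; 0, 1, r; 0, 0, 1] * diagonal ![s, t, 1]
      = !![a * s, (a * p + b) * t, a * q + b * r; c * s, (c * p + d) * t, c * q + d * r;
          0, 0, 1] := by
    ext i j; fin_cases i <;> fin_cases j <;> simp [mul_apply, Fin.sum_univ_three]
  obtain ⟨h₂₂, h₁₁, hdet⟩ := iwasawa_sq_fin_three hk h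
  rw [hg] at h₂₂ h₁₁ hdet
  rw [← h₂₂, ← h₁₁, ← hdet]
  refine ⟨?_, ?_, ?_⟩ <;>
    simp only [mul_apply, transpose_apply, Fin.sum_univ_three, det_fin_three, of_apply, cons_val',
      cons_val_zero, cons_val_one, cons_val, cons_val_fin_one] <;> ring

end Matrix

theorem iwasawa_of_blockGL₂ {γ : Matrix (Fin 2) (Fin 2) ℤ} (hγ : IsUnit γ.det)
    {p q r s t x y z d₁ d₂ d₃ : ℝ} (hs : 0 < s) (ht : 0 < t)
    (hd₁ : 0 < d₁) (hd₂ : 0 < d₂) (hd₃ : 0 < d₃) {k : Matrix (Fin 3) (Fin 3) ℝ} (hk : kᵀ * k = 1)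
    (h : !![(γ 0 0 : ℝ), γ 0 1, 0; γ 1 0, γ 1 1, 0; 0, 0, 1] * !![1, p, q; 0, 1, r; 0, 0, 1] *
        diagonal ![s, t, 1] = !![1, x, y; 0, 1, z; 0, 0, 1] * diagonal ![d₁, d₂, d₃] * k) :
    d₃ = 1 ∧ (d₁ = s ∧ d₂ = t ∨ s ≤ d₂) := by
  obtain ⟨hd₃_sq, hd₂_sq, hdet_sq⟩ := iwasawa_sq_of_blockGL₂ hk h
  obtain rfl : d₃ = 1 := (pow_eq_one_iff_of_nonneg hd₃.le two_ne_zero).mp hd₃_sq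
  simp only [mul_one] at hd₂_sq hdet_sq
  refine ⟨rfl, ?_⟩
  rcases eq_or_ne (γ 1 0) 0 with hc | hc
  · have hγ₁₁ : (γ 1 1 : ℝ) ^ 2 = 1 := by
      exact_mod_cast sq_apply_one_one_eq_one_of_isUnit_det hγ hc
    have hd₂_eq : d₂ = t := by
      refine (sq_eq_sq₀ hd₂.le ht.le).mp ?_
      simp only [hc, Int.cast_zero, zero_mul, zero_add] at hd₂_sq
      linear_combination hd₂_sq + t ^ 2 * hγ₁₁
    subst hd₂_eq
    have hγ_det : ((γ 0 0 * γ 1 1 - γ 0 1 * γ 1 0 : ℤ) : ℝ) ^ 2 = 1 := by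
      rw [← det_fin_two]; exact_mod_cast Int.isUnit_sq hγ
    push_cast at hγ_det
    refine .inl ⟨(sq_eq_sq₀ hd₁.le hs.le).mp ?_, rfl⟩
    refine mul_right_cancel₀ (pow_ne_zero 2 hd₂.ne') ?_
    linear_combination hdet_sq + (s * d₂) ^ 2 * hγ_det
  · have hc₁ : (1 : ℝ) ≤ (γ 1 0 : ℝ) ^ 2 := by
      exact_mod_cast (one_le_sq_iff_one_le_abs _).mpr (Int.one_le_abs hc)
    refine .inr ((pow_le_pow_iff_left₀ hs.le hd₂.le two_ne_zero).mp ?_)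
    nlinarith [sq_nonneg ((γ 1 0 * p + γ 1 1) * t)]

theorem mul_max_le_mul {t y₁ y₂ : ℝ} (ht : 0 ≤ t) (h₁ : t ≤ y₁) (h₂ : t ≤ y₂) :
    t * max y₁ y₂ ≤ y₁ * y₂ := by
  rcases max_cases y₁ y₂ with ⟨h, -⟩ | ⟨h, -⟩ <;> rw [h] <;> nlinarith

theorem stmt_6 (y₁ y₂ : ℝ) (hy₁ : Real.sqrt 3 / 2 ≤ y₁) (hy₂ : Real.sqrt 3 / 2 ≤ y₂)
    (u u' : Matrix (Fin 3) (Fin 3) ℝ)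
    (hu_diag : ∀ i : Fin 3, u i i = 1)
    (hu_low : ∀ i j : Fin 3, (j : ℕ) < (i : ℕ) → u i j = 0)
    (hu'_diag : ∀ i : Fin 3, u' i i = 1)
    (hu'_low : ∀ i j : Fin 3, (j : ℕ) < (i : ℕ) → u' i j = 0)
    (γ : Matrix (Fin 2) (Fin 2) ℤ) (hγ : γ.det = 1 ∨ γ.det = -1)
    (γt : Matrix (Fin 3) (Fin 3) ℝ)
    (hγt : ∀ i j : Fin 3, γt i j =
      if hi : (i : ℕ) < 2 then
        (if hj : (j : ℕ) < 2 then ((γ ⟨(i : ℕ), hi⟩ ⟨(j : ℕ), hj⟩ : ℤ) : ℝ) else 0)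
      else (if (j : ℕ) < 2 then 0 else 1))
    (d₁ d₂ d₃ : ℝ) (hd₁ : 0 < d₁) (hd₂ : 0 < d₂) (hd₃ : 0 < d₃)
    (k : Matrix (Fin 3) (Fin 3) ℝ) (hk : kᵀ * k = 1)
    (hiwa : γt * u * Matrix.diagonal ![y₁ * y₂, y₂, 1]
      = u' * Matrix.diagonal ![d₁, d₂, d₃] * k) :
    max (d₁ / d₂) (d₂ / d₃) ≥ (Real.sqrt 3 / 2) * max y₁ y₂ := by
  have hγt' : γt = !![(γ 0 0 : ℝ), γ 0 1, 0; γ 1 0, γ 1 1, 0; 0, 0, 1] := by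
    ext i j; fin_cases i <;> fin_cases j <;> simp [hγt]
  rw [hγt', eq_of_diag_eq_one_of_lower_eq_zero_fin_three hu_diag hu_low,
    eq_of_diag_eq_one_of_lower_eq_zero_fin_three hu'_diag hu'_low] at hiwa
  have h₀ : 0 < Real.sqrt 3 / 2 := by positivity
  have h₁ : Real.sqrt 3 / 2 ≤ 1 := by
    rw [div_le_one two_pos, Real.sqrt_le_left zero_le_two]; norm_num
  have hy₂_pos : 0 < y₂ := h₀.trans_le hy₂
  have hy₁₂ : 0 < y₁ * y₂ := mul_pos (h₀.trans_le hy₁) hy₂_pos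
  obtain ⟨rfl, ⟨rfl, rfl⟩ | hd₂_ge⟩ :=
    iwasawa_of_blockGL₂ (Int.isUnit_iff.mpr hγ) hy₁₂ hy₂_pos hd₁ hd₂ hd₃ hk hiwa
  · rw [mul_div_cancel_right₀ _ hy₂_pos.ne', div_one, ge_iff_le]
    exact mul_le_of_le_one_left (h₀.le.trans (hy₁.trans (le_max_left _ _))) h₁
  · calc Real.sqrt 3 / 2 * max y₁ y₂ ≤ y₁ * y₂ := mul_max_le_mul h₀.le hy₁ hy₂
      _ ≤ d₂ / 1 := by rwa [div_one]
      _ ≤ _ := le_max_right _ _
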